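/- arXiv:2011.02633 — 3 statements merged into one kernel-verified Lean document; each statement's English description precedes it below -/
import Mathlib

section
/- Let G be a topological gyrogroup, H a closed L-subgyrogroup of G, X a subspace of G, π the natural map of G onto the quotient space G/H, and Y=π(X). If the subspace H and the subspace Y of G/H are first-countable, then X is first-countable. -/
universe u v

/-- A gyrogroup: a set with a binary operation `add`, a (unique) two-sided identity `zero`,
(unique) two-sided inverses `neg`, and gyroautomorphisms `gyr x y` satisfying the left
gyroassociative law and the left loop property. -/
class Gyrogroup (G : Type u) where
  add : G → G → G
  zero : G
  neg : G → G
  gyr : G → G → G → G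
  zero_add : ∀ a : G, add zero a = a
  add_zero : ∀ a : G, add a zero = a
  zero_unique : ∀ z : G, (∀ a : G, add z a = a ∧ add a z = a) → z = zero
  neg_add : ∀ a : G, add (neg a) a = zero
  add_neg : ∀ a : G, add a (neg a) = zero
  neg_unique : ∀ x y : G, add y x = zero → add x y = zero → y = neg x
  gyr_bijective : ∀ x y : G, Function.Bijective (gyr x y)
  gyr_add : ∀ x y a b : G, gyr x y (add a b) = add (gyr x y a) (gyr x y b)
  gyr_assoc : ∀ x y z : G, add x (add y z) = add (add x y) (gyr x y z)
  gyr_left_loop : ∀ x y : G, gyr (add x y) y = gyr x y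

/-- A topological gyrogroup: a gyrogroup with a Hausdorff topology making the operation
jointly continuous and the inversion continuous. -/
def IsTopologicalGyrogroup (G : Type u) [TopologicalSpace G] [Gyrogroup G] : Prop :=
  T2Space G ∧ Continuous (fun p : G × G => Gyrogroup.add p.1 p.2) ∧
    Continuous (Gyrogroup.neg : G → G)

/-- A strongly topological gyrogroup: a topological gyrogroup admitting a neighborhood
base `𝒰` at `0` each member of which is invariant under all gyrations. -/
def IsStronglyTopologicalGyrogroup (G : Type u) [TopologicalSpace G] [Gyrogroup G] : Prop :=
  IsTopologicalGyrogroup G ∧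
    ∃ 𝒰 : Set (Set G),
      (∀ U ∈ 𝒰, U ∈ nhds (Gyrogroup.zero : G)) ∧
      (∀ V ∈ nhds (Gyrogroup.zero : G), ∃ U ∈ 𝒰, U ⊆ V) ∧
      (∀ U ∈ 𝒰, ∀ x y : G, Gyrogroup.gyr x y '' U = U)

/-- Left ω-narrow: every open neighborhood `V` of `0` satisfies `G = A ⊕ V`
for some countable `A`. -/
def LeftOmegaNarrow (G : Type u) [TopologicalSpace G] [Gyrogroup G] : Prop :=
  ∀ V : Set G, IsOpen V → (Gyrogroup.zero : G) ∈ V →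
    ∃ A : Set G, A.Countable ∧ Set.image2 Gyrogroup.add A V = Set.univ

/-- Right ω-narrow: every open neighborhood `V` of `0` satisfies `G = V ⊕ A`
for some countable `A`. -/
def RightOmegaNarrow (G : Type u) [TopologicalSpace G] [Gyrogroup G] : Prop :=
  ∀ V : Set G, IsOpen V → (Gyrogroup.zero : G) ∈ V →
    ∃ A : Set G, A.Countable ∧ Set.image2 Gyrogroup.add V A = Set.univ

/-- ω-narrow: both left and right ω-narrow. -/
def OmegaNarrow (G : Type u) [TopologicalSpace G] [Gyrogroup G] : Prop :=
  LeftOmegaNarrow G ∧ RightOmegaNarrow G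

/-- A subgyrogroup: a nonempty subset forming a gyrogroup under the inherited operation,
the restriction of each `gyr a b` (for `a b ∈ H`) being an automorphism of `H`. -/
structure IsSubgyrogroup (G : Type u) [Gyrogroup G] (H : Set G) : Prop where
  nonempty : H.Nonempty
  zero_mem : (Gyrogroup.zero : G) ∈ H
  add_mem : ∀ a ∈ H, ∀ b ∈ H, Gyrogroup.add a b ∈ H
  neg_mem : ∀ a ∈ H, Gyrogroup.neg a ∈ H
  gyr_image : ∀ a ∈ H, ∀ b ∈ H, Gyrogroup.gyr a b '' H = H

/-- An L-subgyrogroup: a subgyrogroup with `gyr a h (H) = H` for all `a ∈ G`, `h ∈ H`. -/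
structure IsLSubgyrogroup (G : Type u) [Gyrogroup G] (H : Set G)
    extends IsSubgyrogroup G H : Prop where
  gyr_image_L : ∀ a : G, ∀ h ∈ H, Gyrogroup.gyr a h '' H = H

/-- The left coset `a ⊕ H`. -/
def lcoset {G : Type u} [Gyrogroup G] (a : G) (H : Set G) : Set G :=
  (fun h => Gyrogroup.add a h) '' H

/-- The equivalence relation identifying points with the same left coset of `H`;
for an L-subgyrogroup the cosets partition `G` and the quotient is the coset space `G/H`,
which carries the quotient topology. -/
def cosetSetoid {G : Type u} [Gyrogroup G] (H : Set G) : Setoid G :=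
  ⟨fun a b => lcoset a H = lcoset b H, ⟨fun _ => rfl, Eq.symm, Eq.trans⟩⟩

/-- A topological space is feathered if it contains a nonempty compact subset of
countable character. -/
def Feathered (X : Type u) [TopologicalSpace X] : Prop :=
  ∃ K : Set X, K.Nonempty ∧ IsCompact K ∧
    ∃ 𝒞 : Set (Set X), 𝒞.Countable ∧
      (∀ U ∈ 𝒞, IsOpen U ∧ K ⊆ U) ∧
      (∀ W : Set X, IsOpen W → K ⊆ W → ∃ U ∈ 𝒞, U ⊆ W)


section GyroAux

open Gyrogroup Filter Set Topology

variable {G : Type u} [Gyrogroup G]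

private lemma gyro_left_cancel {a b c : G} (h : Gyrogroup.add a b = Gyrogroup.add a c) :
    b = c := by
  have h1 : ∀ d : G, add (neg a) (add a d) = gyr (neg a) a d := fun d => by
    rw [Gyrogroup.gyr_assoc, Gyrogroup.neg_add, Gyrogroup.zero_add]
  have h2 : gyr (neg a) a b = gyr (neg a) a c := by
    rw [← h1, ← h1, h]
  exact (gyr_bijective (neg a) a).1 h2

private lemma gyro_gyr_zero_left (a c : G) : gyr (zero : G) a c = c := by
  have h : add (zero : G) (add a c) = add (add zero a) (gyr zero a c) :=
    Gyrogroup.gyr_assoc _ _ _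
  rw [Gyrogroup.zero_add, Gyrogroup.zero_add] at h
  exact (gyro_left_cancel h).symm

private lemma gyro_neg_add_cancel_left (a b : G) : add (neg a) (add a b) = b := by
  have h := Gyrogroup.gyr_assoc (neg a) a b
  rw [Gyrogroup.neg_add, Gyrogroup.zero_add] at h
  have hl := Gyrogroup.gyr_left_loop (neg a) a
  rw [Gyrogroup.neg_add] at hl
  rw [h, ← hl, gyro_gyr_zero_left]

private lemma gyro_add_neg_cancel_left (a b : G) : add a (add (neg a) b) = b := by
  have h := Gyrogroup.gyr_assoc a (neg a) b
  rw [Gyrogroup.add_neg, Gyrogroup.zero_add] at h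
  have hl := Gyrogroup.gyr_left_loop a (neg a)
  rw [Gyrogroup.add_neg] at hl
  rw [h, ← hl, gyro_gyr_zero_left]

private lemma gyro_mem_lcoset_self {H : Set G} (hz : (zero : G) ∈ H) (a : G) :
    a ∈ lcoset a H :=
  ⟨zero, hz, Gyrogroup.add_zero a⟩

private lemma gyro_lcoset_add {H : Set G} (hH : IsLSubgyrogroup G H) (a : G) {h : G}
    (hh : h ∈ H) : lcoset (add a h) H = lcoset a H := by
  have himg := hH.gyr_image_L a h hh
  ext d
  simp only [lcoset, Set.mem_image]
  constructor
  · rintro ⟨h', hh', rfl⟩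
    have hmem : h' ∈ gyr a h '' H := by rw [himg]; exact hh'
    obtain ⟨c, hc, rfl⟩ := hmem
    exact ⟨add h c, hH.add_mem h hh c hc, Gyrogroup.gyr_assoc a h c⟩
  · rintro ⟨d', hd', rfl⟩
    refine ⟨gyr a h (add (neg h) d'), ?_, ?_⟩
    · have hmem : gyr a h (add (neg h) d') ∈ gyr a h '' H :=
        ⟨_, hH.add_mem _ (hH.neg_mem h hh) _ hd', rfl⟩
      rwa [himg] at hmem
    · rw [← Gyrogroup.gyr_assoc, gyro_add_neg_cancel_left]

end GyroAux

open Filter Set Topology in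

/-- Let `H` be a closed L-subgyrogroup of a topological gyrogroup `G`, `X` a
subspace of `G`, `π` the natural map onto `G/H`, and `Y = π(X)`. If the subspace `H` and the
subspace `Y` of `G/H` are first-countable, then `X` is first-countable. -/
theorem firstCountable_subspace_of_subgyrogroup {G : Type u}
    [TopologicalSpace G] [Gyrogroup G]
    (hG : IsTopologicalGyrogroup G)
    (H : Set G) (hH : IsLSubgyrogroup G H) (hclosed : IsClosed H)
    (X : Set G)
    (hHfc : FirstCountableTopology ↥H)
    (hYfc : FirstCountableTopology ↥(Quotient.mk (cosetSetoid H) '' X)) :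
    FirstCountableTopology ↥X := by
  classical
  obtain ⟨-, hadd, hneg⟩ := hG
  set π : G → Quotient (cosetSetoid H) := Quotient.mk (cosetSetoid H) with hπ
  have hπeq : ∀ {a b : G}, π a = π b → lcoset a H = lcoset b H := fun h => Quotient.exact h
  have hπeq' : ∀ {a b : G}, lcoset a H = lcoset b H → π a = π b := fun h => Quotient.sound h
  have hπcont : Continuous π := continuous_coinduced_rng
  -- π is an open map
  have hπopen : IsOpenMap π := by
    intro U hU
    have key : π ⁻¹' (π '' U) = ⋃ h ∈ H, (fun z : G => Gyrogroup.add z h) ⁻¹' U := by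
      ext z
      simp only [Set.mem_preimage, Set.mem_image, Set.mem_iUnion]
      constructor
      · rintro ⟨u, hu, huz⟩
        have hco : lcoset u H = lcoset z H := hπeq huz
        have hu2 : u ∈ lcoset z H := by
          rw [← hco]; exact gyro_mem_lcoset_self hH.zero_mem u
        obtain ⟨h, hh, hzh⟩ := hu2
        refine ⟨h, hh, ?_⟩
        have hzh' : Gyrogroup.add z h = u := hzh
        exact Set.mem_of_eq_of_mem hzh' hu
      · rintro ⟨h, hh, hzh⟩
        exact ⟨Gyrogroup.add z h, hzh, hπeq' (gyro_lcoset_add hH z hh)⟩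
    have hopen : IsOpen (π ⁻¹' (π '' U)) := by
      rw [key]
      exact isOpen_biUnion fun h _ =>
        (hadd.comp (continuous_id.prodMk continuous_const)).isOpen_preimage U hU
    exact hopen
  constructor
  intro x₀
  set x : G := x₀.1 with hxdef
  have hx : x ∈ X := x₀.2
  -- countable basis at 0 in H
  have h0H : (Gyrogroup.zero : G) ∈ H := hH.zero_mem
  haveI := hHfc.nhds_generated_countable ⟨Gyrogroup.zero, h0H⟩
  obtain ⟨sH, hsH⟩ := Filter.exists_antitone_basis (𝓝 (⟨Gyrogroup.zero, h0H⟩ : ↥H))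
  have hVex : ∀ j : ℕ, ∃ V ∈ 𝓝 (Gyrogroup.zero : G), Subtype.val ⁻¹' V ⊆ sH j := fun j =>
    (mem_nhds_subtype H _ _).1 (hsH.toHasBasis.mem_of_mem trivial)
  choose V hVnhds hVsub using hVex
  have hVbase : ∀ Q ∈ 𝓝 (Gyrogroup.zero : G), ∃ j : ℕ,
      ∀ g : G, g ∈ H → g ∈ V j → g ∈ Q := by
    intro Q hQ
    have hQH : Subtype.val ⁻¹' Q ∈ 𝓝 (⟨Gyrogroup.zero, h0H⟩ : ↥H) :=
      continuous_subtype_val.continuousAt.preimage_mem_nhds hQ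
    obtain ⟨j, -, hj⟩ := hsH.toHasBasis.mem_iff.1 hQH
    exact ⟨j, fun g hgH hgV => hj (hVsub j (show (⟨g, hgH⟩ : ↥H).1 ∈ V j from hgV))⟩
  -- countable basis at π x in Y
  have hπxY : π x ∈ Quotient.mk (cosetSetoid H) '' X := ⟨x, hx, rfl⟩
  haveI := hYfc.nhds_generated_countable ⟨π x, hπxY⟩
  obtain ⟨sY, hsY⟩ := Filter.exists_antitone_basis
    (𝓝 (⟨π x, hπxY⟩ : ↥(Quotient.mk (cosetSetoid H) '' X)))
  have hOex : ∀ m : ℕ, ∃ O ∈ 𝓝 (π x), Subtype.val ⁻¹' O ⊆ sY m := fun m =>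
    (mem_nhds_subtype _ _ _).1 (hsY.toHasBasis.mem_of_mem trivial)
  choose O hOnhds hOsub using hOex
  have hObase : ∀ P ∈ 𝓝 (π x), ∃ m : ℕ,
      ∀ q : Quotient (cosetSetoid H), q ∈ Quotient.mk (cosetSetoid H) '' X →
        q ∈ O m → q ∈ P := by
    intro P hP
    have hPY : Subtype.val ⁻¹' P ∈ 𝓝 (⟨π x, hπxY⟩ : ↥(Quotient.mk (cosetSetoid H) '' X)) :=
      continuous_subtype_val.continuousAt.preimage_mem_nhds hP
    obtain ⟨m, -, hm⟩ := hsY.toHasBasis.mem_iff.1 hPY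
    exact ⟨m, fun q hqY hqO => hm (hOsub m (show (⟨q, hqY⟩ :
      ↥(Quotient.mk (cosetSetoid H) '' X)).1 ∈ O m from hqO))⟩
  -- the auxiliary continuous map θ
  set θ : G × G → G := fun p => Gyrogroup.add (Gyrogroup.neg (Gyrogroup.add x p.1))
    (Gyrogroup.add x p.2) with hθdef
  have hθcont : Continuous θ := by
    have c1 : Continuous fun p : G × G => Gyrogroup.neg (Gyrogroup.add x p.1) :=
      hneg.comp (hadd.comp (continuous_const.prodMk continuous_fst))
    have c2 : Continuous fun p : G × G => Gyrogroup.add x p.2 :=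
      hadd.comp (continuous_const.prodMk continuous_snd)
    exact hadd.comp (c1.prodMk c2)
  have hθ00 : θ ((Gyrogroup.zero : G), (Gyrogroup.zero : G)) = Gyrogroup.zero := by
    simp only [hθdef, Gyrogroup.add_zero, Gyrogroup.neg_add]
  -- choose T j, U j with θ (T j ×ˢ U j) ⊆ V j
  have hTUex : ∀ j : ℕ, ∃ T ∈ 𝓝 (Gyrogroup.zero : G), ∃ U ∈ 𝓝 (Gyrogroup.zero : G),
      T ×ˢ U ⊆ θ ⁻¹' (V j) := by
    intro j
    have hpre : θ ⁻¹' (V j) ∈ 𝓝 ((Gyrogroup.zero : G), (Gyrogroup.zero : G)) :=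
      hθcont.continuousAt.preimage_mem_nhds (by
        show V j ∈ 𝓝 (θ ((Gyrogroup.zero : G), (Gyrogroup.zero : G)))
        rw [hθ00]; exact hVnhds j)
    exact mem_nhds_prod_iff.1 hpre
  choose T hTnhds U hUnhds hTU using hTUex
  have hcont_negx : Continuous fun z : G => Gyrogroup.add (Gyrogroup.neg x) z :=
    hadd.comp (continuous_const.prodMk continuous_id)
  have hnegx_x : Gyrogroup.add (Gyrogroup.neg x) x = Gyrogroup.zero := Gyrogroup.neg_add x
  -- the candidate basis
  set C : ℕ × ℕ → Set ↥X := fun jm =>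
    Subtype.val ⁻¹' (((fun z : G => Gyrogroup.add (Gyrogroup.neg x) z) ⁻¹' U jm.1) ∩
      π ⁻¹' (O jm.2)) with hCdef
  have hCmem : ∀ jm : ℕ × ℕ, C jm ∈ 𝓝 x₀ := by
    intro jm
    apply continuous_subtype_val.continuousAt.preimage_mem_nhds
    apply Filter.inter_mem
    · refine hcont_negx.continuousAt.preimage_mem_nhds ?_
      show U jm.1 ∈ 𝓝 (Gyrogroup.add (Gyrogroup.neg x) x)
      rw [hnegx_x]; exact hUnhds jm.1
    · exact hπcont.continuousAt.preimage_mem_nhds (hOnhds jm.2)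
  have hbasis : (𝓝 x₀).HasBasis (fun _ : ℕ × ℕ => True) C := by
    rw [Filter.hasBasis_iff]
    intro t
    constructor
    · intro ht
      obtain ⟨W, hW, hWt⟩ := (mem_nhds_subtype X x₀ t).1 ht
      -- continuity of add at (x, 0)
      have hWx : (fun p : G × G => Gyrogroup.add p.1 p.2) ⁻¹' W ∈
          𝓝 ((x : G), (Gyrogroup.zero : G)) :=
        hadd.continuousAt.preimage_mem_nhds (by
          show W ∈ 𝓝 (Gyrogroup.add x Gyrogroup.zero)
          rw [Gyrogroup.add_zero]; exact hW)
      obtain ⟨N, hN, Q, hQ, hNQ⟩ := mem_nhds_prod_iff.1 hWx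
      obtain ⟨j, hj⟩ := hVbase Q hQ
      -- the open set M
      set A : Set G := (fun z : G => Gyrogroup.add (Gyrogroup.neg x) z) ⁻¹' T j with hAdef
      have hA : A ∈ 𝓝 x :=
        hcont_negx.continuousAt.preimage_mem_nhds (by
          show T j ∈ 𝓝 (Gyrogroup.add (Gyrogroup.neg x) x)
          rw [hnegx_x]; exact hTnhds j)
      set M : Set G := interior (A ∩ N) with hMdef
      have hxM : x ∈ M := mem_interior_iff_mem_nhds.2 (Filter.inter_mem hA hN)
      have hMopen : IsOpen M := isOpen_interior
      have hπM : π '' M ∈ 𝓝 (π x) := (hπopen M hMopen).mem_nhds ⟨x, hxM, rfl⟩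
      obtain ⟨m, hm⟩ := hObase (π '' M) hπM
      refine ⟨(j, m), trivial, ?_⟩
      rintro z₀ hz₀
      obtain ⟨hz1, hz2⟩ := hz₀
      set z : G := z₀.1 with hzdef
      have hzX : z ∈ X := z₀.2
      have hπzM : π z ∈ π '' M := hm (π z) ⟨z, hzX, rfl⟩ hz2
      obtain ⟨s, hsM, hsz⟩ := hπzM
      have hco : lcoset s H = lcoset z H := hπeq hsz
      have hzs : z ∈ lcoset s H := by
        rw [hco]; exact gyro_mem_lcoset_self hH.zero_mem z
      obtain ⟨h, hhH, hsh⟩ := hzs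
      -- h = θ (t, u) ∈ V j
      have hsA : s ∈ A := (interior_subset hsM).1
      have hsN : s ∈ N := (interior_subset hsM).2
      have htu : ((Gyrogroup.add (Gyrogroup.neg x) s), (Gyrogroup.add (Gyrogroup.neg x) z)) ∈
          T j ×ˢ U j := ⟨hsA, hz1⟩
      have hθtu : θ ((Gyrogroup.add (Gyrogroup.neg x) s), (Gyrogroup.add (Gyrogroup.neg x) z)) ∈
          V j := hTU j htu
      have hθval : θ ((Gyrogroup.add (Gyrogroup.neg x) s), (Gyrogroup.add (Gyrogroup.neg x) z)) =
          h := by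
        show Gyrogroup.add (Gyrogroup.neg (Gyrogroup.add x (Gyrogroup.add (Gyrogroup.neg x) s)))
          (Gyrogroup.add x (Gyrogroup.add (Gyrogroup.neg x) z)) = h
        rw [gyro_add_neg_cancel_left, gyro_add_neg_cancel_left, ← hsh,
          gyro_neg_add_cancel_left]
      have hhV : h ∈ V j := by rw [← hθval]; exact hθtu
      have hhQ : h ∈ Q := hj h hhH hhV
      have hzW : z ∈ W := by
        rw [← hsh]; exact hNQ (Set.mk_mem_prod hsN hhQ)
      exact hWt hzW
    · rintro ⟨jm, -, hsub⟩
      exact Filter.mem_of_superset (hCmem jm) hsub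
  exact hbasis.isCountablyGenerated
end

section
/- Let G be a topological gyrogroup and H a closed L-subgyrogroup of G. If the subspace H and the quotient space G/H are first-countable, then G is first-countable (equivalently, since every first-countable topological gyrogroup is metrizable: if H and G/H are metrizable then G is metrizable). -/
universe u v

namespace GyroAux

variable {G : Type u} [Gyrogroup G]

open Gyrogroup in
lemma gyr_neg_self_eq (y : G) : ∀ z : G, gyr (neg y) y z = z := by
  have hinj : Function.Injective (fun z : G => add y z) := by
    intro a b hab
    have e : ∀ c : G, add (neg y) (add y c) = gyr (neg y) y c := fun c => by
      rw [gyr_assoc, Gyrogroup.neg_add, Gyrogroup.zero_add]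
    have : gyr (neg y) y a = gyr (neg y) y b := by
      rw [← e, ← e]; simpa using congrArg (fun t => add (neg y) t) hab
    exact (gyr_bijective (neg y) y).1 this
  have hzero : ∀ z : G, gyr (zero : G) y z = z := by
    intro z
    have h1 : add y z = add y (gyr (zero : G) y z) := by
      conv_lhs => rw [← Gyrogroup.zero_add (add y z)]
      rw [gyr_assoc, Gyrogroup.zero_add]
    exact (hinj h1).symm
  intro z
  have hll := gyr_left_loop (neg y) y
  rw [Gyrogroup.neg_add] at hll
  rw [← hll]; exact hzero z

open Gyrogroup in
lemma gyr_self_neg_eq (y : G) : ∀ z : G, gyr y (neg y) z = z := by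
  intro z
  have hll := gyr_left_loop y (neg y)
  rw [Gyrogroup.add_neg] at hll
  rw [← hll]
  have hinj : Function.Injective (fun z : G => add (neg y) z) := by
    intro a b hab
    have e : ∀ c : G, add (neg (neg y)) (add (neg y) c) = gyr (neg (neg y)) (neg y) c :=
      fun c => by rw [gyr_assoc, Gyrogroup.neg_add, Gyrogroup.zero_add]
    have : gyr (neg (neg y)) (neg y) a = gyr (neg (neg y)) (neg y) b := by
      rw [← e, ← e]; simpa using congrArg (fun t => add (neg (neg y)) t) hab
    exact (gyr_bijective _ _).1 this
  have h1 : add (neg y) z = add (neg y) (gyr (zero : G) (neg y) z) := by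
    conv_lhs => rw [← Gyrogroup.zero_add (add (neg y) z)]
    rw [gyr_assoc, Gyrogroup.zero_add]
  exact (hinj h1).symm

open Gyrogroup in
lemma neg_add_cancel_left (v x : G) : add (neg v) (add v x) = x := by
  rw [gyr_assoc, Gyrogroup.neg_add, Gyrogroup.zero_add, gyr_neg_self_eq]

open Gyrogroup in
lemma add_neg_cancel_left (v x : G) : add v (add (neg v) x) = x := by
  rw [gyr_assoc, Gyrogroup.add_neg, Gyrogroup.zero_add, gyr_self_neg_eq]

open Gyrogroup in
lemma coset_add {H : Set G} (hH : IsLSubgyrogroup G H) (b : G) {h : G} (hh : h ∈ H) :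
    lcoset (add b h) H = lcoset b H := by
  ext x
  constructor
  · rintro ⟨k, hk, rfl⟩
    obtain ⟨z, hz, hzk⟩ : ∃ z ∈ H, gyr b h z = k := by
      have him := hH.gyr_image_L b h hh
      rw [← him] at hk
      obtain ⟨z, hz1, hz2⟩ := hk
      exact ⟨z, hz1, hz2⟩
    refine ⟨add h z, hH.toIsSubgyrogroup.add_mem h hh z hz, ?_⟩
    show add b (add h z) = add (add b h) k
    rw [gyr_assoc, hzk]
  · rintro ⟨k, hk, rfl⟩
    refine ⟨gyr b h (add (neg h) k), ?_, ?_⟩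
    · have hz : add (neg h) k ∈ H :=
        hH.toIsSubgyrogroup.add_mem _ (hH.toIsSubgyrogroup.neg_mem h hh) _ hk
      have him := hH.gyr_image_L b h hh
      rw [← him]; exact ⟨_, hz, rfl⟩
    · show add (add b h) (gyr b h (add (neg h) k)) = add b k
      rw [← gyr_assoc, add_neg_cancel_left]

end GyroAux

/-- If `H` is a closed L-subgyrogroup of a topological gyrogroup `G` such that
the subspace `H` and the quotient space `G/H` are first-countable, then `G` is
first-countable. -/
theorem firstCountable_of_subgyrogroup_and_quotient {G : Type u}
    [TopologicalSpace G] [Gyrogroup G]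
    (hG : IsTopologicalGyrogroup G)
    (H : Set G) (hH : IsLSubgyrogroup G H) (hclosed : IsClosed H)
    (hHfc : FirstCountableTopology ↥H)
    (hQfc : FirstCountableTopology (Quotient (cosetSetoid H))) :
    FirstCountableTopology G := by
  classical
  obtain ⟨_ht2, hadd, hneg⟩ := hG
  set z0 : G := Gyrogroup.zero with hz0
  let π : G → Quotient (cosetSetoid H) := Quotient.mk (cosetSetoid H)
  have hπcont : Continuous π := continuous_quot_mk
  -- decomposition of points with the same coset
  have hdecomp : ∀ v x : G, π v = π x → ∃ h ∈ H, x = Gyrogroup.add v h := by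
    intro v x hvx
    have hrel : lcoset v H = lcoset x H := Quotient.eq.mp hvx
    have hxmem : x ∈ lcoset x H := ⟨z0, hH.toIsSubgyrogroup.zero_mem, Gyrogroup.add_zero x⟩
    rw [← hrel] at hxmem
    obtain ⟨h, hh, he⟩ := hxmem
    exact ⟨h, hh, he.symm⟩
  have hπadd : ∀ (b h : G), h ∈ H → π (Gyrogroup.add b h) = π b := by
    intro b h hh
    exact Quotient.sound (GyroAux.coset_add hH b hh)
  -- π is an open map
  have hπopen : IsOpenMap π := by
    intro U hU
    have hset : π ⁻¹' (π '' U) = ⋃ h ∈ H, (fun x => Gyrogroup.add x h) ⁻¹' U := by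
      ext x
      simp only [Set.mem_preimage, Set.mem_image, Set.mem_iUnion]
      constructor
      · rintro ⟨u, huU, hq⟩
        obtain ⟨h, hh, he⟩ := hdecomp x u hq.symm
        exact ⟨h, hh, by rw [← he]; exact huU⟩
      · rintro ⟨h, hh, hxU⟩
        exact ⟨Gyrogroup.add x h, hxU, hπadd x h hh⟩
    have hopen2 : IsOpen (π ⁻¹' (π '' U)) := by
      rw [hset]
      exact isOpen_biUnion fun h _ =>
        hU.preimage (hadd.comp (continuous_id.prodMk continuous_const))
    exact (isQuotientMap_quot_mk).isOpen_preimage.mp hopen2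
  -- countable neighborhood data in H
  have hz0H : z0 ∈ H := hH.toIsSubgyrogroup.zero_mem
  haveI hcg1 : (nhds (⟨z0, hz0H⟩ : ↥H)).IsCountablyGenerated :=
    hHfc.nhds_generated_countable ⟨z0, hz0H⟩
  obtain ⟨t, ht⟩ := Filter.exists_antitone_basis (nhds (⟨z0, hz0H⟩ : ↥H))
  have hOex : ∀ k : ℕ, ∃ O : Set G, IsOpen O ∧ z0 ∈ O ∧ (Subtype.val ⁻¹' O : Set ↥H) ⊆ t k := by
    intro k
    have htk : t k ∈ nhds (⟨z0, hz0H⟩ : ↥H) := ht.toHasBasis.mem_of_mem trivial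
    rw [nhds_subtype_eq_comap] at htk
    obtain ⟨U, hU, hsub⟩ := Filter.mem_comap.mp htk
    exact ⟨interior U, isOpen_interior, mem_interior_iff_mem_nhds.mpr hU,
      fun y hy => hsub (show (y : G) ∈ U from interior_subset hy)⟩
  choose O hOopen hO0 hOsub using hOex
  have hHbase : ∀ N ∈ nhds z0, ∃ k : ℕ, ∀ x ∈ H, x ∈ O k → x ∈ N := by
    intro N hN
    have : (Subtype.val ⁻¹' N : Set ↥H) ∈ nhds (⟨z0, hz0H⟩ : ↥H) := by
      rw [nhds_subtype_eq_comap]; exact Filter.preimage_mem_comap hN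
    obtain ⟨k, -, hk⟩ := ht.toHasBasis.mem_iff.mp this
    exact ⟨k, fun x hxH hxO => hk (hOsub k (show (⟨x, hxH⟩ : ↥H) ∈ _ from hxO))⟩
  -- countable neighborhood data in the quotient
  haveI hcg2 : (nhds (π z0)).IsCountablyGenerated := hQfc.nhds_generated_countable (π z0)
  obtain ⟨b, hb⟩ := Filter.exists_antitone_basis (nhds (π z0))
  have hWex : ∀ m : ℕ, ∃ W : Set (Quotient (cosetSetoid H)), IsOpen W ∧ π z0 ∈ W ∧ W ⊆ b m := by
    intro m
    have hbm : b m ∈ nhds (π z0) := hb.toHasBasis.mem_of_mem trivial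
    obtain ⟨W, hWsub, hWopen, hWmem⟩ := mem_nhds_iff.mp hbm
    exact ⟨W, hWopen, hWmem, hWsub⟩
  choose W hWopen hW0 hWsub using hWex
  have hQbase : ∀ N ∈ nhds (π z0), ∃ m : ℕ, W m ⊆ N := by
    intro N hN
    obtain ⟨m, -, hm⟩ := hb.toHasBasis.mem_iff.mp hN
    exact ⟨m, (hWsub m).trans hm⟩
  -- the sets T n : (⊖ T n) ⊕ T n ⊆ O n
  have hg : Continuous fun p : G × G => Gyrogroup.add (Gyrogroup.neg p.1) p.2 :=
    hadd.comp ((hneg.comp continuous_fst).prodMk continuous_snd)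
  have hTex : ∀ n : ℕ, ∃ T : Set G, IsOpen T ∧ z0 ∈ T ∧
      ∀ a ∈ T, ∀ c ∈ T, Gyrogroup.add (Gyrogroup.neg a) c ∈ O n := by
    intro n
    have h00 : Gyrogroup.add (Gyrogroup.neg z0) z0 = z0 := Gyrogroup.neg_add z0
    have hpre : (fun p : G × G => Gyrogroup.add (Gyrogroup.neg p.1) p.2) ⁻¹' O n ∈
        nhds ((z0, z0) : G × G) := by
      refine hg.continuousAt.preimage_mem_nhds ?_
      rw [h00]
      exact (hOopen n).mem_nhds (hO0 n)
    obtain ⟨u, hu, v, hv, huv⟩ := mem_nhds_prod_iff.mp hpre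
    refine ⟨interior u ∩ interior v, isOpen_interior.inter isOpen_interior,
      ⟨mem_interior_iff_mem_nhds.mpr hu, mem_interior_iff_mem_nhds.mpr hv⟩, ?_⟩
    intro a ha c hc
    have hac : (a, c) ∈ u ×ˢ v := ⟨interior_subset ha.1, interior_subset hc.2⟩
    exact huv hac
  choose T hTopen hT0 hTsub using hTex
  -- the countable basis at z0
  let s : ℕ × ℕ → Set G := fun nm => T nm.1 ∩ π ⁻¹' W nm.2
  have hsmem : ∀ nm : ℕ × ℕ, s nm ∈ nhds z0 := by
    intro nm
    exact ((hTopen nm.1).inter ((hWopen nm.2).preimage hπcont)).mem_nhds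
      ⟨hT0 nm.1, hW0 nm.2⟩
  have hbasis : (nhds z0).HasBasis (fun _ : ℕ × ℕ => True) s := by
    constructor
    intro Uu
    constructor
    · intro hUu
      -- split Uu via continuity of ⊕ at (0,0)
      have h00 : Gyrogroup.add z0 z0 = z0 := Gyrogroup.zero_add z0
      have hpre : (fun p : G × G => Gyrogroup.add p.1 p.2) ⁻¹' Uu ∈ nhds ((z0, z0) : G × G) := by
        refine hadd.continuousAt.preimage_mem_nhds ?_
        rw [h00]; exact hUu
      obtain ⟨P₁, hP₁, P₂, hP₂, hP⟩ := mem_nhds_prod_iff.mp hpre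
      obtain ⟨n, hn⟩ := hHbase (interior P₂) (isOpen_interior.mem_nhds
        (mem_interior_iff_mem_nhds.mpr hP₂))
      -- V := interior P₁ ∩ T n
      have hVopen : IsOpen (interior P₁ ∩ T n) := isOpen_interior.inter (hTopen n)
      have hV0 : z0 ∈ interior P₁ ∩ T n :=
        ⟨mem_interior_iff_mem_nhds.mpr hP₁, hT0 n⟩
      have hπV : π '' (interior P₁ ∩ T n) ∈ nhds (π z0) :=
        (hπopen _ hVopen).mem_nhds ⟨z0, hV0, rfl⟩
      obtain ⟨m, hm⟩ := hQbase _ hπV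
      refine ⟨(n, m), trivial, ?_⟩
      rintro x ⟨hxT, hxW⟩
      obtain ⟨v, hvV, hvx⟩ := hm hxW
      obtain ⟨h, hhH, hxeq⟩ := hdecomp v x hvx
      have hhO : h ∈ O n := by
        have : Gyrogroup.add (Gyrogroup.neg v) x ∈ O n := hTsub n v hvV.2 x hxT
        rwa [hxeq, GyroAux.neg_add_cancel_left] at this
      have hhP₂ : h ∈ P₂ := interior_subset (hn h hhH hhO)
      have hvP₁ : v ∈ P₁ := interior_subset hvV.1
      have hvh : (v, h) ∈ P₁ ×ˢ P₂ := ⟨hvP₁, hhP₂⟩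
      have : Gyrogroup.add v h ∈ Uu := hP hvh
      rwa [← hxeq] at this
    · rintro ⟨i, -, hsub⟩
      exact Filter.mem_of_superset (hsmem i) hsub
  have h0cg : (nhds z0).IsCountablyGenerated := hbasis.isCountablyGenerated
  -- transfer to all points via left translations
  refine ⟨fun a => ?_⟩
  let e : G ≃ₜ G :=
    { toFun := fun x => Gyrogroup.add a x
      invFun := fun x => Gyrogroup.add (Gyrogroup.neg a) x
      left_inv := fun x => GyroAux.neg_add_cancel_left a x
      right_inv := fun x => GyroAux.add_neg_cancel_left a x
      continuous_toFun := hadd.comp (continuous_const.prodMk continuous_id)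
      continuous_invFun := hadd.comp (continuous_const.prodMk continuous_id) }
  have hea : e z0 = a := Gyrogroup.add_zero a
  have hmap : nhds a = Filter.map e (nhds z0) := by
    rw [e.map_nhds_eq, hea]
  rw [hmap]
  exact (hbasis.map e).isCountablyGenerated
end

section
/- If a metrizable strongly topological gyrogroup G is topologically isomorphic to a subgyrogroup of a separable strongly topological gyrogroup, then G is separable. -/
universe u v

namespace GyroAux
open Gyrogroup
variable {G : Type u} [Gyrogroup G]

lemma neg_add_add (a b : G) : add (neg a) (add a b) = gyr (neg a) a b := by
  rw [gyr_assoc, Gyrogroup.neg_add, Gyrogroup.zero_add]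

lemma left_injective (a : G) : Function.Injective (fun b : G => add a b) := by
  intro x y h
  have h2 : gyr (neg a) a x = gyr (neg a) a y := by
    rw [← neg_add_add, ← neg_add_add]; simp only at h; rw [h]
  exact (gyr_bijective (neg a) a).1 h2

lemma gyr_zero_left (b z : G) : gyr zero b z = z := by
  apply left_injective b
  have := gyr_assoc (zero : G) b z
  rw [Gyrogroup.zero_add, Gyrogroup.zero_add] at this
  exact this.symm

lemma gyr_neg_self (a z : G) : gyr (neg a) a z = z := by
  have := congrFun (congrFun (congrArg gyr (Gyrogroup.neg_add a)) a) z
  rw [← gyr_left_loop (neg a) a, this, gyr_zero_left]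

lemma left_cancel (a b : G) : add (neg a) (add a b) = b := by
  rw [neg_add_add, gyr_neg_self]

lemma gyr_self_neg (a z : G) : gyr a (neg a) z = z := by
  have := congrFun (congrFun (congrArg gyr (Gyrogroup.add_neg a)) (neg a)) z
  rw [← gyr_left_loop a (neg a), this, gyr_zero_left]

lemma left_cancel' (a b : G) : add a (add (neg a) b) = b := by
  rw [gyr_assoc, Gyrogroup.add_neg, Gyrogroup.zero_add, gyr_self_neg]

lemma gyrator (a b z : G) : gyr a b z = add (neg (add a b)) (add a (add b z)) := by
  have h := gyr_assoc a b z
  rw [h, left_cancel]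

lemma neg_zero : (neg zero : G) = zero := by
  have := Gyrogroup.neg_add (zero : G)
  rwa [Gyrogroup.add_zero] at this

lemma rdiv {a v g : G} (h : add a v = g) :
    a = add g (add (neg (add g v)) g) := by
  have h1 : add (add a v) (gyr a v (neg v)) = a := by
    rw [← gyr_assoc, Gyrogroup.add_neg, Gyrogroup.add_zero]
  have h2 : gyr a v (neg v) = gyr g v (neg v) := by
    rw [← h, gyr_left_loop]
  have h3 : gyr g v (neg v) = add (neg (add g v)) g := by
    rw [gyrator, Gyrogroup.add_neg, Gyrogroup.add_zero]
  rw [h, h2, h3] at h1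
  exact h1.symm

lemma gyrator_pair (a w' w : G) :
    add (neg (add a w')) (add a w) = gyr a w' (add (neg w') w) := by
  rw [gyrator, left_cancel']

end GyroAux
namespace GyroAux
open Gyrogroup

/-- Separable topological gyrogroup is left ω-narrow (witnessed by any dense set). -/
lemma narrow_of_dense {X : Type v} [TopologicalSpace X] [Gyrogroup X]
    (hca : Continuous fun p : X × X => add p.1 p.2) (hcn : Continuous (neg : X → X))
    {D : Set X} (hD : Dense D) {W : Set X} (hW : IsOpen W) (h0 : (zero : X) ∈ W)
    (g : X) : ∃ d ∈ D, ∃ w ∈ W, add d w = g := by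
  have hcont : Continuous fun x : X => add (neg x) g :=
    hca.comp ((hcn.prodMk continuous_const))
  have hTopen : IsOpen ((fun x : X => add (neg x) g) ⁻¹' W) := hW.preimage hcont
  have hgT : g ∈ (fun x : X => add (neg x) g) ⁻¹' W := by
    simpa only [Set.mem_preimage, Gyrogroup.neg_add] using h0
  obtain ⟨d, hdD, hdT⟩ := hD.exists_mem_open hTopen ⟨g, hgT⟩
  exact ⟨d, hdD, add (neg d) g, hdT, left_cancel' d g⟩

/-- Guran-type lemma: a subgyrogroup of a separable strongly topological gyrogroup is
left ω-narrow. -/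
lemma subgyro_narrow {X : Type v} [TopologicalSpace X] [Gyrogroup X]
    (hX : IsStronglyTopologicalGyrogroup X) (hsep : TopologicalSpace.SeparableSpace X)
    (H : Set X) (hH : IsSubgyrogroup X H)
    {U : Set X} (hU : IsOpen U) (h0 : (zero : X) ∈ U) :
    ∃ C : Set X, C.Countable ∧ C ⊆ H ∧
      ∀ h ∈ H, ∃ c ∈ C, ∃ t, t ∈ U ∧ t ∈ H ∧ add c t = h := by
  classical
  obtain ⟨⟨_, hca, hcn⟩, 𝒰, h𝒰n, h𝒰b, h𝒰g⟩ := hX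
  obtain ⟨U', hU'𝒰, hU'U⟩ := h𝒰b U (hU.mem_nhds h0)
  have hU'n : U' ∈ nhds (zero : X) := h𝒰n U' hU'𝒰
  -- find open W ∋ 0 with (⊖W) ⊕ W ⊆ U'
  have hψ : Continuous fun p : X × X => add (neg p.1) p.2 :=
    hca.comp ((hcn.comp continuous_fst).prodMk continuous_snd)
  have hψ0 : (fun p : X × X => add (neg p.1) p.2) (zero, zero) = (zero : X) := by
    simp only [neg_zero, Gyrogroup.add_zero]
  have hpre : (fun p : X × X => add (neg p.1) p.2) ⁻¹' U' ∈ nhds ((zero : X), (zero : X)) :=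
    hψ.continuousAt.preimage_mem_nhds
      (by simp only [neg_zero, Gyrogroup.add_zero]; exact hU'n)
  rw [mem_nhds_prod_iff] at hpre
  obtain ⟨u1, hu1, u2, hu2, huv⟩ := hpre
  obtain ⟨W, hWsub, hWopen, hW0⟩ := mem_nhds_iff.mp (Filter.inter_mem hu1 hu2)
  have hWkey : ∀ x ∈ W, ∀ y ∈ W, add (neg x) y ∈ U' := by
    intro x hx y hy
    exact huv (Set.mk_mem_prod (hWsub hx).1 (hWsub hy).2)
  obtain ⟨D, hDc, hDd⟩ := TopologicalSpace.exists_countable_dense X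
  have key := fun g => narrow_of_dense hca hcn hDd hWopen hW0 g
  -- choice function
  set P : X → Prop := fun a => ∃ x, x ∈ H ∧ ∃ w ∈ W, add a w = x with hP
  set c : X → X := fun a => if h : P a then h.choose else zero with hc
  refine ⟨c '' D, hDc.image c, ?_, ?_⟩
  · rintro x ⟨a, _, rfl⟩
    by_cases h : P a
    · simp only [hc, dif_pos h]; exact h.choose_spec.1
    · simp only [hc, dif_neg h]; exact hH.zero_mem
  · intro h hh
    obtain ⟨d, hdD, w, hwW, hdw⟩ := key h
    have hPd : P d := ⟨h, hh, w, hwW, hdw⟩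
    have hcd : c d = hPd.choose := by simp only [hc, dif_pos hPd]
    obtain ⟨hcdH, w', hw'W, hdw'⟩ := hPd.choose_spec
    rw [← hcd] at hcdH hdw'
    refine ⟨c d, ⟨d, hdD, rfl⟩, add (neg (c d)) h, ?_, ?_, left_cancel' _ _⟩
    · have ht : add (neg (c d)) h = gyr d w' (add (neg w') w) := by
        rw [← hdw', ← hdw]; exact gyrator_pair d w' w
      rw [ht]
      have : gyr d w' (add (neg w') w) ∈ gyr d w' '' U' :=
        ⟨add (neg w') w, hWkey w' hw'W w hwW, rfl⟩
      rw [h𝒰g U' hU'𝒰 d w'] at this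
      exact hU'U this
    · exact hH.add_mem _ (hH.neg_mem _ hcdH) _ hh

end GyroAux

/-- If a metrizable strongly topological gyrogroup `G` is topologically
isomorphic to a subgyrogroup `H` of a separable strongly topological gyrogroup `X`,
then `G` is separable. -/
theorem separable_of_metrizable_subgyrogroup_of_separable {G : Type u}
    [TopologicalSpace G] [Gyrogroup G]
    (hG : IsStronglyTopologicalGyrogroup G) [TopologicalSpace.MetrizableSpace G]
    {X : Type v} [TopologicalSpace X] [Gyrogroup X]
    (hX : IsStronglyTopologicalGyrogroup X)
    (hXsep : TopologicalSpace.SeparableSpace X)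
    (H : Set X) (hH : IsSubgyrogroup X H)
    (f : G → X)
    (hhom : ∀ a b : G, f (Gyrogroup.add a b) = Gyrogroup.add (f a) (f b))
    (hrange : Set.range f = H) (hemb : Topology.IsEmbedding f) :
    TopologicalSpace.SeparableSpace G := by
  open Gyrogroup GyroAux in
  have hca : Continuous fun p : G × G => add p.1 p.2 := hG.1.2.1
  have hcn : Continuous (neg : G → G) := hG.1.2.2
  -- f maps zero to zero
  have hf0 : f (zero : G) = (zero : X) := by
    have h1 : f (zero : G) = add (f zero) (f zero) := by
      have := hhom zero zero; rwa [Gyrogroup.zero_add] at this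
    have h2 : add (f (zero : G)) (zero : X) = add (f zero) (f zero) := by
      rw [Gyrogroup.add_zero]; exact h1
    exact (left_injective (f zero) h2).symm
  -- G is left ω-narrow
  have key2 : ∀ V : Set G, IsOpen V → (zero : G) ∈ V →
      ∃ A : Set G, A.Countable ∧ ∀ g : G, ∃ a ∈ A, ∃ v ∈ V, add a v = g := by
    intro V hV h0V
    obtain ⟨O, hOopen, hOpre⟩ := hemb.toIsInducing.isOpen_iff.mp hV
    have h0O : (zero : X) ∈ O := by
      have : f (zero : G) ∈ O := by rw [← hOpre] at h0V; exact h0V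
      rwa [hf0] at this
    obtain ⟨C, hCc, hCH, hCcov⟩ := subgyro_narrow hX hXsep H hH hOopen h0O
    refine ⟨f ⁻¹' C, hCc.preimage hemb.injective, ?_⟩
    intro g
    have hfgH : f g ∈ H := hrange ▸ Set.mem_range_self g
    obtain ⟨c, hcC, t, htO, htH, hct⟩ := hCcov (f g) hfgH
    obtain ⟨a, rfl⟩ : c ∈ Set.range f := hrange ▸ hCH hcC
    obtain ⟨v, rfl⟩ : t ∈ Set.range f := hrange ▸ htH
    have hvV : v ∈ V := by rw [← hOpre]; exact htO
    have : f (add a v) = f g := by rw [hhom]; exact hct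
    exact ⟨a, hcC, v, hvV, hemb.injective this⟩
  -- countable antitone basis at zero
  obtain ⟨u, hu⟩ := (nhds (zero : G)).exists_antitone_basis
  have hun : ∀ n, u n ∈ nhds (zero : G) := fun n => hu.1.mem_of_mem trivial
  have h0i : ∀ n, (zero : G) ∈ interior (u n) := fun n =>
    mem_interior_iff_mem_nhds.mpr (hun n)
  choose A hAc hAcov using fun n : ℕ =>
    key2 (interior (u n)) isOpen_interior (h0i n)
  refine ⟨⟨⋃ n, A n, Set.countable_iUnion hAc, ?_⟩⟩
  rw [dense_iff_inter_open]
  intro U hUopen ⟨g, hgU⟩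
  -- the "right division" map φ v = g ⊕ (⊖(g ⊕ v) ⊕ g)
  have hφ : Continuous fun v : G => add g (add (neg (add g v)) g) := by
    have c1 : Continuous fun v : G => add g v :=
      hca.comp (continuous_const.prodMk continuous_id)
    have c2 : Continuous fun v : G => add (neg (add g v)) g :=
      hca.comp ((hcn.comp c1).prodMk continuous_const)
    exact hca.comp (continuous_const.prodMk c2)
  have hφ0 : add g (add (neg (add g (zero : G))) g) = g := by
    rw [Gyrogroup.add_zero, Gyrogroup.neg_add, Gyrogroup.add_zero]
  have hpre : (fun v : G => add g (add (neg (add g v)) g)) ⁻¹' U ∈ nhds (zero : G) :=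
    hφ.continuousAt.preimage_mem_nhds (by simp only [hφ0]; exact hUopen.mem_nhds hgU)
  obtain ⟨n, -, hsub⟩ := hu.1.mem_iff.mp hpre
  obtain ⟨a, haA, v, hvO, hav⟩ := hAcov n g
  refine ⟨a, ?_, Set.mem_iUnion.mpr ⟨n, haA⟩⟩
  have : a = add g (add (neg (add g v)) g) := rdiv hav
  rw [this]
  exact hsub (interior_subset hvO)
end
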